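/- arXiv:math/0406043 — 3 statements merged into one kernel-verified Lean document; each statement's English description precedes it below -/
import Mathlib

section
/- Every element g of G_BV can be written as g = L·M·R, where L belongs to the submonoid of G_BV generated by {v_i : i ∈ ℕ}, R belongs to the submonoid of G_BV generated by {v_i^{-1} : i ∈ ℕ}, and there exists h ≥ 1 such that M is of height containing h. -/
namespace BrinStmt12

/-- The free-group generators for the presentation of `G_BV`:
`Sum.inl n` is `v_n`, `Sum.inr (Sum.inl n)` is `π_n`, and
`Sum.inr (Sum.inr n)` is `π̄_n`. -/
def vF (n : ℕ) : FreeGroup (ℕ ⊕ ℕ ⊕ ℕ) := FreeGroup.of (Sum.inl n)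
def piF (n : ℕ) : FreeGroup (ℕ ⊕ ℕ ⊕ ℕ) := FreeGroup.of (Sum.inr (Sum.inl n))
def opiF (n : ℕ) : FreeGroup (ℕ ⊕ ℕ ⊕ ℕ) := FreeGroup.of (Sum.inr (Sum.inr n))

/-- The relators (R1)–(R10) of the presentation of the group `G_BV`. -/
def gbvRels : Set (FreeGroup (ℕ ⊕ ℕ ⊕ ℕ)) :=
  { r | (∃ m q : ℕ, m < q ∧ r = vF q * vF m * (vF m * vF (q+1))⁻¹) ∨
        (∃ m q : ℕ, m < q ∧ r = piF q * vF m * (vF m * piF (q+1))⁻¹) ∨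
        (∃ (m : ℕ) (e : ℤ), (e = 1 ∨ e = -1) ∧
            r = (piF m) ^ e * vF m *
              (vF (m+1) * (piF m) ^ e * (piF (m+1)) ^ e)⁻¹) ∨
        (∃ m q : ℕ, q + 1 < m ∧ r = piF q * vF m * (vF m * piF q)⁻¹) ∨
        (∃ m q : ℕ, m < q ∧ r = opiF q * vF m * (vF m * opiF (q+1))⁻¹) ∨
        (∃ (m : ℕ) (e : ℤ), (e = 1 ∨ e = -1) ∧
            r = (opiF m) ^ e * vF m * ((piF m) ^ e * (opiF (m+1)) ^ e)⁻¹) ∨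
        (∃ m q : ℕ, (m + 2 ≤ q ∨ q + 2 ≤ m) ∧
            r = piF q * piF m * (piF m * piF q)⁻¹) ∨
        (∃ m : ℕ, r = piF m * piF (m+1) * piF m *
            (piF (m+1) * piF m * piF (m+1))⁻¹) ∨
        (∃ m q : ℕ, m + 2 ≤ q ∧ r = opiF q * piF m * (piF m * opiF q)⁻¹) ∨
        (∃ m : ℕ, r = piF m * opiF (m+1) * piF m *
            (opiF (m+1) * piF m * opiF (m+1))⁻¹) }

/-- The group `G_BV`, presented by generators `v_n, π_n, π̄_n` and relations (R1)–(R10). -/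
abbrev GBV := PresentedGroup gbvRels

/-- The generator `v_n` of `G_BV`. -/
def vG (n : ℕ) : GBV := PresentedGroup.of (Sum.inl n)
/-- The generator `π_n` of `G_BV`. -/
def piG (n : ℕ) : GBV := PresentedGroup.of (Sum.inr (Sum.inl n))
/-- The generator `π̄_n` of `G_BV`. -/
def opiG (n : ℕ) : GBV := PresentedGroup.of (Sum.inr (Sum.inr n))

/-- For `h ≥ 1`, the element `M` of `G_BV` is of height containing `h` if it is a
product of factors each of which is `π_i^{±1}` with `i ≤ h-2` (i.e. `i + 2 ≤ h`)
or `π̄_{h-1}^{±1}`; equivalently, `M` lies in the subgroup generated by the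
`π_i` with `i + 2 ≤ h` together with `π̄_{h-1}`. -/
def HeightContains (h : ℕ) (M : GBV) : Prop :=
  M ∈ Subgroup.closure ({x : GBV | ∃ i, i + 2 ≤ h ∧ x = piG i} ∪ {opiG (h-1)})

/-!
Write `P`, `N` for the submonoids generated by the `v_i` and by the `v_i⁻¹`, and `H_k` for the
subgroup of elements of height containing `k + 1`. The set `P · (⋃ₖ H_k) · N` contains `1` and is
stable under left multiplication by each generator and its inverse, so it is the whole group.
The heart of the matter is that `H_k ⊆ P · H_{k+1}` and `H_k · v_m ⊆ P · H_{k+1}` for `m ≤ k`,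
proved together along a word in the generators of `H_k`: the height is raised by
`π̄_k^ε = v_k π̄_{k+1}^ε π_k^ε`, a consequence of (R6). This yields `H · P ⊆ P · H`, by inversion
`N · H ⊆ H · N`, and with `v_q⁻¹ P ⊆ P · N` (from (R1)) these rules give the stability.
-/

open Pointwise

section SetMul

variable {M S : Type*} [Monoid M] [SetLike S M] [SubmonoidClass S M]

lemma mul_mem_set_mul_of_mem {s : Set M} {T : S} {g x : M} (hg : g ∈ s * T) (hx : x ∈ T) :
    g * x ∈ s * T := by
  obtain ⟨a, ha, b, hb, rfl⟩ := hg
  rw [mul_assoc]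
  exact Set.mul_mem_mul ha (mul_mem hb hx)

lemma mul_mem_mul_set_of_mem {T : S} {t : Set M} {g x : M} (hx : x ∈ T) (hg : g ∈ (T : Set M) * t) :
    x * g ∈ (T : Set M) * t := by
  obtain ⟨a, ha, b, hb, rfl⟩ := hg
  rw [← mul_assoc]
  exact Set.mul_mem_mul (mul_mem hx ha) hb

end SetMul

section Relations

lemma zpow_mul_eq_mul_zpow_of_mul_eq {G : Type*} [Group G] {a b c : G} (h : a * b = b * c)
    (n : ℤ) : a ^ n * b = b * c ^ n :=
  (SemiconjBy.zpow_right h.symm n).symm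

variable {m q : ℕ} {e : ℤ}

lemma vG_mul_vG_of_lt (h : m < q) : vG q * vG m = vG m * vG (q + 1) :=
  PresentedGroup.mk_eq_mk_of_mul_inv_mem (Or.inl ⟨m, q, h, rfl⟩)

lemma piG_zpow_mul_vG_of_lt (h : m < q) (e : ℤ) :
    piG q ^ e * vG m = vG m * piG (q + 1) ^ e :=
  zpow_mul_eq_mul_zpow_of_mul_eq
    (PresentedGroup.mk_eq_mk_of_mul_inv_mem (Or.inr (Or.inl ⟨m, q, h, rfl⟩))) e

lemma piG_zpow_mul_vG_self (he : e = 1 ∨ e = -1) (m : ℕ) :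
    piG m ^ e * vG m = vG (m + 1) * piG m ^ e * piG (m + 1) ^ e :=
  PresentedGroup.mk_eq_mk_of_mul_inv_mem (Or.inr (Or.inr (Or.inl ⟨m, e, he, rfl⟩)))

lemma piG_zpow_mul_vG_of_succ_lt (h : q + 1 < m) (e : ℤ) :
    piG q ^ e * vG m = vG m * piG q ^ e :=
  zpow_mul_eq_mul_zpow_of_mul_eq
    (PresentedGroup.mk_eq_mk_of_mul_inv_mem (Or.inr (Or.inr (Or.inr (Or.inl ⟨m, q, h, rfl⟩))))) e

lemma opiG_zpow_mul_vG_of_lt (h : m < q) (e : ℤ) :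
    opiG q ^ e * vG m = vG m * opiG (q + 1) ^ e :=
  zpow_mul_eq_mul_zpow_of_mul_eq (PresentedGroup.mk_eq_mk_of_mul_inv_mem
    (Or.inr (Or.inr (Or.inr (Or.inr (Or.inl ⟨m, q, h, rfl⟩)))))) e

lemma opiG_zpow_mul_vG_self (he : e = 1 ∨ e = -1) (m : ℕ) :
    opiG m ^ e * vG m = piG m ^ e * opiG (m + 1) ^ e :=
  PresentedGroup.mk_eq_mk_of_mul_inv_mem
    (Or.inr (Or.inr (Or.inr (Or.inr (Or.inr (Or.inl ⟨m, e, he, rfl⟩))))))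

lemma piG_zpow_mul_vG_succ (he : e = 1 ∨ e = -1) (q : ℕ) :
    piG q ^ e * vG (q + 1) = vG q * piG (q + 1) ^ e * piG q ^ e := by
  have h := piG_zpow_mul_vG_self (e := -e) (by omega) q
  simp only [zpow_neg] at h
  rw [eq_mul_inv_iff_mul_eq, eq_mul_inv_iff_mul_eq] at h
  rw [← h]; group

lemma opiG_zpow_eq (he : e = 1 ∨ e = -1) (n : ℕ) :
    opiG n ^ e = vG n * opiG (n + 1) ^ e * piG n ^ e := by
  have h := opiG_zpow_mul_vG_self (e := -e) (by omega) n
  simp only [zpow_neg] at h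
  rw [inv_mul_eq_iff_eq_mul, ← mul_inv_rev, eq_mul_inv_iff_mul_eq] at h
  rw [← h]; group

lemma vG_inv_mul_vG_of_lt (h : m < q) : (vG q)⁻¹ * vG m = vG m * (vG (q + 1))⁻¹ := by
  rw [inv_mul_eq_iff_eq_mul, ← mul_assoc, eq_mul_inv_iff_mul_eq, vG_mul_vG_of_lt h]

lemma vG_inv_mul_vG_of_gt (h : q < m) : (vG q)⁻¹ * vG m = vG (m + 1) * (vG q)⁻¹ := by
  rw [inv_mul_eq_iff_eq_mul, ← mul_assoc, eq_mul_inv_iff_mul_eq, vG_mul_vG_of_lt h]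

end Relations

def vPlus : Submonoid GBV := Submonoid.closure {x : GBV | ∃ i, x = vG i}

def vMinus : Submonoid GBV := Submonoid.closure {x : GBV | ∃ i, x = (vG i)⁻¹}

lemma vG_mem_vPlus (i : ℕ) : vG i ∈ vPlus := Submonoid.subset_closure ⟨i, rfl⟩

lemma vG_inv_mem_vMinus (i : ℕ) : (vG i)⁻¹ ∈ vMinus := Submonoid.subset_closure ⟨i, rfl⟩

lemma coe_vMinus : (vMinus : Set GBV) = (vPlus : Set GBV)⁻¹ := by
  rw [vMinus, vPlus, ← Submonoid.coe_inv, ← Submonoid.closure_inv]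
  congr 2
  ext x
  simp [inv_eq_iff_eq_inv]

/-- `heightGroup k` consists of the elements of height containing `k + 1`. -/
def heightGroup (k : ℕ) : Subgroup GBV :=
  Subgroup.closure ({x | ∃ i < k, x = piG i} ∪ {opiG k})

lemma heightContains_succ_iff {k : ℕ} {M : GBV} : HeightContains (k + 1) M ↔ M ∈ heightGroup k := by
  have hpi : {x : GBV | ∃ i, i + 2 ≤ k + 1 ∧ x = piG i} = {x | ∃ i < k, x = piG i} := by
    ext x
    exact exists_congr fun i => and_congr_left fun _ => by omega
  rw [HeightContains, heightGroup, hpi, Nat.add_sub_cancel]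

lemma piG_mem_heightGroup {i k : ℕ} (h : i < k) : piG i ∈ heightGroup k :=
  Subgroup.subset_closure (Or.inl ⟨i, h, rfl⟩)

lemma opiG_mem_heightGroup (k : ℕ) : opiG k ∈ heightGroup k :=
  Subgroup.subset_closure (Or.inr rfl)

section Raising

variable {k : ℕ} {e : ℤ}

lemma piG_zpow_mul_vG_mem {i m : ℕ} (he : e = 1 ∨ e = -1) (hi : i < k) (hm : m ≤ k) :
    ∃ m' ≤ k, ∃ P ∈ heightGroup (k + 1), piG i ^ e * vG m = vG m' * P := by
  have hpi (j : ℕ) (hj : j < k + 1) : piG j ^ e ∈ heightGroup (k + 1) :=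
    zpow_mem (piG_mem_heightGroup hj) e
  rcases lt_trichotomy m i with h | rfl | h
  · exact ⟨m, hm, _, hpi _ (by omega), piG_zpow_mul_vG_of_lt h e⟩
  · refine ⟨m + 1, hi, _, mul_mem (hpi m (by omega)) (hpi (m + 1) (by omega)), ?_⟩
    rw [piG_zpow_mul_vG_self he, mul_assoc]
  · rcases (Nat.succ_le_of_lt h).eq_or_lt with rfl | h
    · refine ⟨i, hi.le, _, mul_mem (hpi (i + 1) (by omega)) (hpi i (by omega)), ?_⟩
      rw [piG_zpow_mul_vG_succ he, mul_assoc]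
    · exact ⟨m, hm, _, hpi _ (by omega), piG_zpow_mul_vG_of_succ_lt h e⟩

def IsRaisable (k : ℕ) (M : GBV) : Prop :=
  M ∈ (vPlus : Set GBV) * heightGroup (k + 1) ∧
    ∀ m ≤ k, M * vG m ∈ (vPlus : Set GBV) * heightGroup (k + 1)

lemma isRaisable_one : IsRaisable k 1 :=
  ⟨Set.mul_mem_mul (one_mem _) (one_mem _), fun m _ =>
    ⟨vG m, vG_mem_vPlus m, 1, one_mem _, mul_one _⟩⟩

lemma IsRaisable.mul_piG_zpow {M : GBV} {i : ℕ} (hM : IsRaisable k M) (he : e = 1 ∨ e = -1)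
    (hi : i < k) : IsRaisable k (M * piG i ^ e) := by
  refine ⟨mul_mem_set_mul_of_mem hM.1 (zpow_mem (piG_mem_heightGroup (by omega)) e),
    fun m hm => ?_⟩
  obtain ⟨m', hm', P, hP, hcross⟩ := piG_zpow_mul_vG_mem he hi hm
  rw [mul_assoc, hcross, ← mul_assoc]
  exact mul_mem_set_mul_of_mem (hM.2 m' hm') hP

lemma IsRaisable.mul_opiG_zpow {M : GBV} (hM : IsRaisable k M) (he : e = 1 ∨ e = -1) :
    IsRaisable k (M * opiG k ^ e) := by
  have hopi : opiG (k + 1) ^ e ∈ heightGroup (k + 1) := zpow_mem (opiG_mem_heightGroup _) e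
  have hpi : piG k ^ e ∈ heightGroup (k + 1) := zpow_mem (piG_mem_heightGroup k.lt_succ_self) e
  refine ⟨?_, fun m hm => ?_⟩
  · rw [opiG_zpow_eq he, mul_assoc (vG k), ← mul_assoc]
    exact mul_mem_set_mul_of_mem (hM.2 k le_rfl) (mul_mem hopi hpi)
  · rcases hm.eq_or_lt with rfl | hm
    · rw [mul_assoc, opiG_zpow_mul_vG_self he]
      exact mul_mem_set_mul_of_mem hM.1 (mul_mem hpi hopi)
    · rw [mul_assoc, opiG_zpow_mul_vG_of_lt hm, ← mul_assoc]
      exact mul_mem_set_mul_of_mem (hM.2 m hm.le) hopi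

lemma isRaisable_of_mem {M : GBV} (hM : M ∈ heightGroup k) : IsRaisable k M := by
  have hstep : ∀ x ∈ ({x | ∃ i < k, x = piG i} ∪ {opiG k} : Set GBV),
      ∀ e : ℤ, (e = 1 ∨ e = -1) → ∀ N, IsRaisable k N → IsRaisable k (N * x ^ e) := by
    rintro x (⟨i, hi, rfl⟩ | rfl) e he N hN
    · exact hN.mul_piG_zpow he hi
    · exact hN.mul_opiG_zpow he
  induction hM using Subgroup.closure_induction_right with
  | one => exact isRaisable_one
  | mul_right N _ x hx hN => simpa using hstep x hx 1 (Or.inl rfl) N hN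
  | mul_inv_cancel N _ x hx hN => simpa using hstep x hx (-1) (Or.inr rfl) N hN

end Raising

lemma heightGroup_subset_vPlus_mul {k K : ℕ} (h : k ≤ K) :
    (heightGroup k : Set GBV) ⊆ (vPlus : Set GBV) * heightGroup K := by
  induction K, h using Nat.le_induction with
  | base => exact Set.subset_mul_right _ (one_mem vPlus)
  | succ K _ ih =>
    calc (heightGroup k : Set GBV)
        ⊆ (vPlus : Set GBV) * heightGroup K := ih
      _ ⊆ (vPlus : Set GBV) * ((vPlus : Set GBV) * heightGroup (K + 1)) :=
          Set.mul_subset_mul_left fun _ hM => (isRaisable_of_mem hM).1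
      _ = (vPlus : Set GBV) * heightGroup (K + 1) := by rw [← mul_assoc, coe_mul_coe]

lemma heightGroup_subset_mul_vMinus {k K : ℕ} (h : k ≤ K) :
    (heightGroup k : Set GBV) ⊆ heightGroup K * (vMinus : Set GBV) := by
  rw [coe_vMinus, ← inv_coe_set (H := heightGroup K), ← mul_inv_rev,
    ← inv_coe_set (H := heightGroup k)]
  exact Set.inv_subset_inv.mpr (heightGroup_subset_vPlus_mul h)

def ofHeight : Set GBV := ⋃ k, (heightGroup k : Set GBV)

lemma mem_ofHeight {k : ℕ} {M : GBV} (hM : M ∈ heightGroup k) : M ∈ ofHeight :=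
  Set.mem_iUnion_of_mem k hM

lemma inv_ofHeight : ofHeight⁻¹ = ofHeight := by
  simp only [ofHeight, Set.iUnion_inv, inv_coe_set]

lemma mul_vG_mem_vPlus_mul_ofHeight {k : ℕ} {M : GBV} (hM : M ∈ heightGroup k) (m : ℕ) :
    M * vG m ∈ (vPlus : Set GBV) * ofHeight := by
  obtain ⟨L, hL, M', hM', rfl⟩ := heightGroup_subset_vPlus_mul (le_max_left k m) hM
  obtain ⟨L', hL', M'', hM'', hcross⟩ := (isRaisable_of_mem hM').2 m (le_max_right k m)
  rw [mul_assoc, ← hcross, ← mul_assoc]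
  exact Set.mul_mem_mul (mul_mem hL hL') (mem_ofHeight hM'')

lemma mul_mem_vPlus_mul_ofHeight {k : ℕ} {M L : GBV} (hM : M ∈ heightGroup k) (hL : L ∈ vPlus) :
    M * L ∈ (vPlus : Set GBV) * ofHeight := by
  induction hL using Submonoid.closure_induction_left generalizing M k with
  | one => simpa using Set.mul_mem_mul (one_mem vPlus) (mem_ofHeight hM)
  | mul_left x hx L _ ih =>
    obtain ⟨m, rfl⟩ := hx
    obtain ⟨L', hL', M', hM', hcross⟩ := mul_vG_mem_vPlus_mul_ofHeight hM m
    obtain ⟨k', hM'⟩ := Set.mem_iUnion.mp hM'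
    rw [← mul_assoc, ← hcross, mul_assoc]
    exact mul_mem_mul_set_of_mem hL' (ih hM')

lemma ofHeight_mul_vPlus_subset : ofHeight * (vPlus : Set GBV) ⊆ (vPlus : Set GBV) * ofHeight := by
  rintro _ ⟨M, hM, L, hL, rfl⟩
  obtain ⟨k, hM⟩ := Set.mem_iUnion.mp hM
  exact mul_mem_vPlus_mul_ofHeight hM hL

lemma vMinus_mul_ofHeight_subset :
    (vMinus : Set GBV) * ofHeight ⊆ ofHeight * (vMinus : Set GBV) := by
  rw [coe_vMinus, ← inv_ofHeight, ← mul_inv_rev, ← mul_inv_rev]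
  exact Set.inv_subset_inv.mpr ofHeight_mul_vPlus_subset

lemma ofHeight_mul_ofHeight_subset :
    ofHeight * ofHeight ⊆ (vPlus : Set GBV) * ofHeight * vMinus := by
  rintro _ ⟨M, hM, M', hM', rfl⟩
  obtain ⟨k, hM⟩ := Set.mem_iUnion.mp hM
  obtain ⟨k', hM'⟩ := Set.mem_iUnion.mp hM'
  have hprod : M * M' ∈ ((vPlus : Set GBV) * heightGroup (max k k')) *
      (heightGroup (max k k') * (vMinus : Set GBV)) :=
    Set.mul_mem_mul (heightGroup_subset_vPlus_mul (le_max_left k k') hM)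
      (heightGroup_subset_mul_vMinus (le_max_right k k') hM')
  rw [mul_assoc, ← mul_assoc (heightGroup _ : Set GBV), coe_mul_coe, ← mul_assoc] at hprod
  exact Set.mul_subset_mul_right (Set.mul_subset_mul_left (Set.subset_iUnion _ _)) hprod

lemma vG_inv_mul_mem (q : ℕ) {L : GBV} (hL : L ∈ vPlus) :
    (vG q)⁻¹ * L ∈ (vPlus : Set GBV) * vMinus := by
  induction hL using Submonoid.closure_induction_left generalizing q with
  | one => simpa using Set.mul_mem_mul (one_mem vPlus) (vG_inv_mem_vMinus q)
  | mul_left x hx L hL ih =>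
    obtain ⟨m, rfl⟩ := hx
    rcases lt_trichotomy m q with h | rfl | h
    · rw [← mul_assoc, vG_inv_mul_vG_of_lt h, mul_assoc]
      exact mul_mem_mul_set_of_mem (vG_mem_vPlus m) (ih (q + 1))
    · simpa using Set.mul_mem_mul (s := (vPlus : Set GBV)) hL (one_mem vMinus)
    · rw [← mul_assoc, vG_inv_mul_vG_of_gt h, mul_assoc]
      exact mul_mem_mul_set_of_mem (vG_mem_vPlus (m + 1)) (ih q)

def lmrSet : Set GBV := (vPlus : Set GBV) * ofHeight * vMinus

lemma one_mem_lmrSet : (1 : GBV) ∈ lmrSet :=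
  ⟨1, ⟨1, one_mem vPlus, 1, mem_ofHeight (one_mem (heightGroup 0)), mul_one 1⟩, 1,
    one_mem vMinus, mul_one 1⟩

lemma vPlus_mul_lmrSet_subset : (vPlus : Set GBV) * lmrSet ⊆ lmrSet := by
  rw [lmrSet, ← mul_assoc, ← mul_assoc, coe_mul_coe]

lemma vG_inv_mul_lmrSet_subset (q : ℕ) : {(vG q)⁻¹} * lmrSet ⊆ lmrSet := by
  have hv : {(vG q)⁻¹} * (vPlus : Set GBV) ⊆ (vPlus : Set GBV) * vMinus := by
    rintro _ ⟨_, rfl, L, hL, rfl⟩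
    exact vG_inv_mul_mem q hL
  calc {(vG q)⁻¹} * lmrSet
      = {(vG q)⁻¹} * (vPlus : Set GBV) * ofHeight * vMinus := by simp only [lmrSet, mul_assoc]
    _ ⊆ (vPlus : Set GBV) * vMinus * ofHeight * vMinus := by gcongr
    _ = (vPlus : Set GBV) * (vMinus * ofHeight) * vMinus := by simp only [mul_assoc]
    _ ⊆ (vPlus : Set GBV) * (ofHeight * vMinus) * vMinus := by
        gcongr _ * ?_ * _; exact vMinus_mul_ofHeight_subset
    _ = lmrSet := by rw [lmrSet, mul_assoc, mul_assoc, coe_mul_coe, ← mul_assoc]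

lemma ofHeight_mul_lmrSet_subset : ofHeight * lmrSet ⊆ lmrSet :=
  calc ofHeight * lmrSet
      = ofHeight * vPlus * ofHeight * (vMinus : Set GBV) := by simp only [lmrSet, mul_assoc]
    _ ⊆ vPlus * ofHeight * ofHeight * (vMinus : Set GBV) := by
        gcongr ?_ * _ * _; exact ofHeight_mul_vPlus_subset
    _ = vPlus * (ofHeight * ofHeight) * (vMinus : Set GBV) := by simp only [mul_assoc]
    _ ⊆ vPlus * (vPlus * ofHeight * vMinus) * (vMinus : Set GBV) := by
        gcongr _ * ?_ * _; exact ofHeight_mul_ofHeight_subset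
    _ = lmrSet := by
        rw [lmrSet, ← mul_assoc, ← mul_assoc, coe_mul_coe, mul_assoc _ (vMinus : Set GBV),
          coe_mul_coe]

lemma mem_lmrSet (g : GBV) : g ∈ lmrSet := by
  have hg : g ∈ Subgroup.closure (Set.range PresentedGroup.of) := by
    rw [PresentedGroup.closure_range_of]; trivial
  induction hg using Subgroup.closure_induction_left with
  | one => exact one_mem_lmrSet
  | mul_left x hx y _ hy =>
    obtain ⟨a | i | i, rfl⟩ := hx
    · exact vPlus_mul_lmrSet_subset (Set.mul_mem_mul (vG_mem_vPlus a) hy)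
    · exact ofHeight_mul_lmrSet_subset
        (Set.mul_mem_mul (mem_ofHeight (piG_mem_heightGroup i.lt_succ_self)) hy)
    · exact ofHeight_mul_lmrSet_subset (Set.mul_mem_mul (mem_ofHeight (opiG_mem_heightGroup i)) hy)
  | inv_mul_cancel x hx y _ hy =>
    obtain ⟨a | i | i, rfl⟩ := hx
    · exact vG_inv_mul_lmrSet_subset a (Set.mul_mem_mul rfl hy)
    · exact ofHeight_mul_lmrSet_subset
        (Set.mul_mem_mul (mem_ofHeight (inv_mem (piG_mem_heightGroup i.lt_succ_self))) hy)
    · exact ofHeight_mul_lmrSet_subset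
        (Set.mul_mem_mul (mem_ofHeight (inv_mem (opiG_mem_heightGroup i))) hy)

/-- Lemma: every element of `G_BV` can be written `L·M·R` with `L` in the submonoid
generated by the `v_i`, `R` in the submonoid generated by the `v_i⁻¹`, and `M` of
height containing some `h ≥ 1`. -/
theorem LMR_form_with_height (g : GBV) :
    ∃ L ∈ Submonoid.closure {x : GBV | ∃ i, x = vG i},
    ∃ R ∈ Submonoid.closure {x : GBV | ∃ i, x = (vG i)⁻¹},
    ∃ (M : GBV) (h : ℕ), 1 ≤ h ∧ HeightContains h M ∧ g = L * M * R := by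
  obtain ⟨_, ⟨L, hL, M, hM, rfl⟩, R, hR, rfl⟩ := mem_lmrSet g
  obtain ⟨k, hM⟩ := Set.mem_iUnion.mp hM
  exact ⟨L, hL, R, hR, M, k + 1, k.succ_pos, heightContains_succ_iff.mpr hM, rfl⟩

end BrinStmt12
end

section
/- Let L be an element of BV̂ of height no more than k (with respect to the elements v_n), and let m ∈ ℕ. Then L·v_m has height no more than k+1 if m ≤ k−1, and L·v_m has height no more than m+2 if m ≥ k−1. -/
/-!
Writing `L = λ_{i_1} ⋯ λ_{i_k} λ_0^{-k}`, one gets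
`L v_m = λ_{i_1} ⋯ λ_{i_k} λ_0^{m+1-k} λ_1 λ_0^{-(m+2)}`.
If `m + 1 ≤ k`, the negative power `λ_0^{-(k-m-1)}` moves past `λ_1` by the relation
`λ_0⁻¹ λ_q = λ_{q+1} λ_0⁻¹` (`q ≥ 1`), turning it into `λ_{k-m}`; otherwise
`λ_0^{m+1-k} λ_1` is already a positive word in the `λ_i`.
-/

namespace BrinStmt13

/-- The free-group generators for the infinite presentation of `BVhat`:
`Sum.inl i` is the generator `λ_i` and `Sum.inr i` is the generator `σ_i`. -/
def lamF (i : ℕ) : FreeGroup (ℕ ⊕ ℕ) := FreeGroup.of (Sum.inl i)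
def sigF (i : ℕ) : FreeGroup (ℕ ⊕ ℕ) := FreeGroup.of (Sum.inr i)

/-- The relators of the infinite presentation of the group `BV̂`. -/
def bvhatRels : Set (FreeGroup (ℕ ⊕ ℕ)) :=
  { r | (∃ m q : ℕ, m < q ∧ r = lamF q * lamF m * (lamF m * lamF (q+1))⁻¹) ∨
        (∃ m n : ℕ, (m + 2 ≤ n ∨ n + 2 ≤ m) ∧
            r = sigF m * sigF n * (sigF n * sigF m)⁻¹) ∨
        (∃ m : ℕ, r = sigF m * sigF (m+1) * sigF m *
            (sigF (m+1) * sigF m * sigF (m+1))⁻¹) ∨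
        (∃ (m q : ℕ) (e : ℤ), (e = 1 ∨ e = -1) ∧ m < q ∧
            r = (sigF q) ^ e * lamF m * (lamF m * (sigF (q+1)) ^ e)⁻¹) ∨
        (∃ (m : ℕ) (e : ℤ), (e = 1 ∨ e = -1) ∧
            r = (sigF m) ^ e * lamF m *
              (lamF (m+1) * (sigF m) ^ e * (sigF (m+1)) ^ e)⁻¹) ∨
        (∃ (m : ℕ) (e : ℤ), (e = 1 ∨ e = -1) ∧
            r = (sigF m) ^ e * lamF (m+1) *
              (lamF m * (sigF (m+1)) ^ e * (sigF m) ^ e)⁻¹) ∨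
        (∃ (m q : ℕ) (e : ℤ), (e = 1 ∨ e = -1) ∧ q + 1 < m ∧
            r = (sigF q) ^ e * lamF m * (lamF m * (sigF q) ^ e)⁻¹) }

/-- The group `BV̂`, given by its infinite presentation. -/
abbrev BVhat := PresentedGroup bvhatRels

/-- The generator `λ_i` of `BV̂`. -/
def lamB (i : ℕ) : BVhat := PresentedGroup.of (Sum.inl i)
/-- The generator `σ_i` of `BV̂`. -/
def sigB (i : ℕ) : BVhat := PresentedGroup.of (Sum.inr i)

/-- The element `v_n = λ_0^{n+1} λ_1 λ_0^{-n-2}` of `BV̂`. -/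
def vB (n : ℕ) : BVhat := lamB 0 ^ (n+1) * lamB 1 * lamB 0 ^ (-((n : ℤ) + 2))
/-- The element `π_n = λ_0^{n+2} σ_1 λ_0^{-n-2}` of `BV̂`. -/
def piB (n : ℕ) : BVhat := lamB 0 ^ (n+2) * sigB 1 * lamB 0 ^ (-((n : ℤ) + 2))
/-- The element `π̄_n = λ_0^{n+1} σ_0 λ_0^{-n-1}` of `BV̂`. -/
def opiB (n : ℕ) : BVhat := lamB 0 ^ (n+1) * sigB 0 * lamB 0 ^ (-((n : ℤ) + 1))

/-- An element `L` of `BV̂` has height no more than `k` if it can be written as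
`λ_{i_1} λ_{i_2} ⋯ λ_{i_k} * λ_0^{-k}`. -/
def HeightLE (k : ℕ) (L : BVhat) : Prop :=
  ∃ l : List ℕ, l.length = k ∧ L = (l.map lamB).prod * lamB 0 ^ (-(k : ℤ))

lemma lamB_mul_lamB_of_lt {m q : ℕ} (h : m < q) : lamB q * lamB m = lamB m * lamB (q + 1) :=
  PresentedGroup.mk_eq_mk_of_mul_inv_mem (x := lamF q * lamF m) (y := lamF m * lamF (q + 1))
    (Or.inl ⟨m, q, h, rfl⟩)

lemma lamB_zero_inv_pow_mul_lamB {q : ℕ} (hq : 0 < q) (j : ℕ) :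
    (lamB 0)⁻¹ ^ j * lamB q = lamB (q + j) * (lamB 0)⁻¹ ^ j := by
  induction j generalizing q with
  | zero => simp
  | succ j ih =>
    have hstep : (lamB 0)⁻¹ * lamB q = lamB (q + 1) * (lamB 0)⁻¹ := by
      rw [inv_mul_eq_iff_eq_mul, ← mul_assoc, ← lamB_mul_lamB_of_lt hq, mul_inv_cancel_right]
    rw [pow_succ, mul_assoc, hstep, ← mul_assoc, ih (Nat.succ_pos q), mul_assoc,
      show q + 1 + j = q + (j + 1) by omega]

lemma prod_mul_lamB_zero_zpow_mul_vB (l : List ℕ) (k m : ℕ) :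
    (l.map lamB).prod * lamB 0 ^ (-(k : ℤ)) * vB m =
      (l.map lamB).prod * lamB 0 ^ ((m : ℤ) + 1 - k) * lamB 1 * lamB 0 ^ (-((m : ℤ) + 2)) := by
  rw [vB]
  group

/-- Lemma: if `L ∈ BV̂` has height no more than `k` and `m ∈ ℕ`, then `L·v_m` has
height no more than `k+1` if `m ≤ k-1` (i.e. `m+1 ≤ k`), and `L·v_m` has height
no more than `m+2` if `m ≥ k-1` (i.e. `k ≤ m+1`). -/
theorem height_of_mul_v (k m : ℕ) (L : BVhat) (hL : HeightLE k L) :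
    (m + 1 ≤ k → HeightLE (k + 1) (L * vB m)) ∧
    (k ≤ m + 1 → HeightLE (m + 2) (L * vB m)) := by
  obtain ⟨l, rfl, rfl⟩ := hL
  refine ⟨fun hmk => ?_, fun hkm => ?_⟩
  · obtain ⟨j, hj⟩ := Nat.exists_eq_add_of_le hmk
    refine ⟨l ++ [1 + j], by simp, ?_⟩
    have hexp : (m : ℤ) + 1 - (l.length : ℤ) = -(j : ℤ) := by omega
    rw [prod_mul_lamB_zero_zpow_mul_vB, hexp, zpow_neg, zpow_natCast, ← inv_pow,
      mul_assoc _ _ (lamB 1), lamB_zero_inv_pow_mul_lamB one_pos]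
    simp only [List.map_append, List.prod_append, List.map_cons, List.map_nil, List.prod_cons,
      List.prod_nil, mul_one, hj]
    push_cast
    group
  · obtain ⟨j, hj⟩ := Nat.exists_eq_add_of_le hkm
    refine ⟨l ++ List.replicate j 0 ++ [1], by simp; omega, ?_⟩
    have hexp : (m : ℤ) + 1 - (l.length : ℤ) = j := by omega
    rw [prod_mul_lamB_zero_zpow_mul_vB, hexp, zpow_natCast]
    simp only [List.map_append, List.prod_append, List.map_replicate, List.prod_replicate,
      List.map_cons, List.map_nil, List.prod_cons, List.prod_nil, mul_one]
    push_cast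
    rfl

end BrinStmt13
end

section
/- Let H be the group with presentation: generators v_n and π̄_n for n ∈ ℕ, and relations (for ε = ±1): v_q v_m = v_m v_{q+1} for m < q; π_m^ε v_m = v_{m+1} π_m^ε π_{m+1}^ε for m ≥ 0; π_q v_m = v_m π_q for m > q+1; π̄_q v_m = v_m π̄_{q+1} for m < q; π_m = π̄_{m+1}^{-1} v_m^{-1} π̄_m for m ≥ 0; π_q π_m = π_m π_q for |m−q| ≥ 2; π_m π_{m+1} π_m = π_{m+1} π_m π_{m+1} for m ≥ 0; π̄_q π_m = π_m π̄_q for q ≥ m+2; π_m π̄_{m+1} π_m = π̄_{m+1} π_m π̄_{m+1} for m ≥ 0, where in these relations π_n abbreviates the word π̄_n v_n π̄_{n+1}^{-1} for each n ∈ ℕ. Then H is isomorphic to G_BV via the map sending v_n ↦ v_n and π̄_n ↦ π̄_n. -/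
namespace BrinStmt19

/-- The free-group generators for the presentation of `G_BV`:
`Sum.inl n` is `v_n`, `Sum.inr (Sum.inl n)` is `π_n`, and
`Sum.inr (Sum.inr n)` is `π̄_n`. -/
def vF (n : ℕ) : FreeGroup (ℕ ⊕ ℕ ⊕ ℕ) := FreeGroup.of (Sum.inl n)
def piF (n : ℕ) : FreeGroup (ℕ ⊕ ℕ ⊕ ℕ) := FreeGroup.of (Sum.inr (Sum.inl n))
def opiF (n : ℕ) : FreeGroup (ℕ ⊕ ℕ ⊕ ℕ) := FreeGroup.of (Sum.inr (Sum.inr n))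

/-- The relators (R1)–(R10) of the presentation of the group `G_BV`. -/
def gbvRels : Set (FreeGroup (ℕ ⊕ ℕ ⊕ ℕ)) :=
  { r | (∃ m q : ℕ, m < q ∧ r = vF q * vF m * (vF m * vF (q+1))⁻¹) ∨
        (∃ m q : ℕ, m < q ∧ r = piF q * vF m * (vF m * piF (q+1))⁻¹) ∨
        (∃ (m : ℕ) (e : ℤ), (e = 1 ∨ e = -1) ∧
            r = (piF m) ^ e * vF m *
              (vF (m+1) * (piF m) ^ e * (piF (m+1)) ^ e)⁻¹) ∨
        (∃ m q : ℕ, q + 1 < m ∧ r = piF q * vF m * (vF m * piF q)⁻¹) ∨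
        (∃ m q : ℕ, m < q ∧ r = opiF q * vF m * (vF m * opiF (q+1))⁻¹) ∨
        (∃ (m : ℕ) (e : ℤ), (e = 1 ∨ e = -1) ∧
            r = (opiF m) ^ e * vF m * ((piF m) ^ e * (opiF (m+1)) ^ e)⁻¹) ∨
        (∃ m q : ℕ, (m + 2 ≤ q ∨ q + 2 ≤ m) ∧
            r = piF q * piF m * (piF m * piF q)⁻¹) ∨
        (∃ m : ℕ, r = piF m * piF (m+1) * piF m *
            (piF (m+1) * piF m * piF (m+1))⁻¹) ∨
        (∃ m q : ℕ, m + 2 ≤ q ∧ r = opiF q * piF m * (piF m * opiF q)⁻¹) ∨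
        (∃ m : ℕ, r = piF m * opiF (m+1) * piF m *
            (opiF (m+1) * piF m * opiF (m+1))⁻¹) }

/-- The group `G_BV`, presented by generators `v_n, π_n, π̄_n` and relations (R1)–(R10). -/
abbrev GBV := PresentedGroup gbvRels

/-- The generator `v_n` of `G_BV`. -/
def vG (n : ℕ) : GBV := PresentedGroup.of (Sum.inl n)
/-- The generator `π_n` of `G_BV`. -/
def piG (n : ℕ) : GBV := PresentedGroup.of (Sum.inr (Sum.inl n))
/-- The generator `π̄_n` of `G_BV`. -/
def opiG (n : ℕ) : GBV := PresentedGroup.of (Sum.inr (Sum.inr n))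

/-- The free-group generators for the presentation of `H`: `Sum.inl n` is `v_n`
and `Sum.inr n` is `π̄_n`. -/
def vW (n : ℕ) : FreeGroup (ℕ ⊕ ℕ) := FreeGroup.of (Sum.inl n)
def oW (n : ℕ) : FreeGroup (ℕ ⊕ ℕ) := FreeGroup.of (Sum.inr n)
/-- In the presentation of `H`, `π_n` abbreviates the word `π̄_n v_n π̄_{n+1}⁻¹`. -/
def pW (n : ℕ) : FreeGroup (ℕ ⊕ ℕ) := oW n * vW n * (oW (n+1))⁻¹

/-- The relators of the presentation of `H` on the generators `v_n, π̄_n`. -/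
def hRels : Set (FreeGroup (ℕ ⊕ ℕ)) :=
  { r | (∃ m q : ℕ, m < q ∧ r = vW q * vW m * (vW m * vW (q+1))⁻¹) ∨
        (∃ (m : ℕ) (e : ℤ), (e = 1 ∨ e = -1) ∧
            r = (pW m) ^ e * vW m * (vW (m+1) * (pW m) ^ e * (pW (m+1)) ^ e)⁻¹) ∨
        (∃ m q : ℕ, q + 1 < m ∧ r = pW q * vW m * (vW m * pW q)⁻¹) ∨
        (∃ m q : ℕ, m < q ∧ r = oW q * vW m * (vW m * oW (q+1))⁻¹) ∨
        (∃ m : ℕ, r = pW m * ((oW (m+1))⁻¹ * (vW m)⁻¹ * oW m)⁻¹) ∨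
        (∃ m q : ℕ, (m + 2 ≤ q ∨ q + 2 ≤ m) ∧
            r = pW q * pW m * (pW m * pW q)⁻¹) ∨
        (∃ m : ℕ, r = pW m * pW (m+1) * pW m * (pW (m+1) * pW m * pW (m+1))⁻¹) ∨
        (∃ m q : ℕ, m + 2 ≤ q ∧ r = oW q * pW m * (pW m * oW q)⁻¹) ∨
        (∃ m : ℕ, r = pW m * oW (m+1) * pW m * (oW (m+1) * pW m * oW (m+1))⁻¹) }

/-- The group `H`, presented by generators `v_n, π̄_n` and the relations above. -/
abbrev HGrp := PresentedGroup hRels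

/-! ### Auxiliary material -/

lemma mk_rel_one {α : Type*} {rels : Set (FreeGroup α)} {r : FreeGroup α} (h : r ∈ rels) :
    PresentedGroup.mk rels r = 1 :=
  (QuotientGroup.eq_one_iff r).2 (Subgroup.subset_normalClosure h)

/-- Generators of `H`. -/
def vH (n : ℕ) : HGrp := PresentedGroup.of (Sum.inl n)
def oH (n : ℕ) : HGrp := PresentedGroup.of (Sum.inr n)
def pH (n : ℕ) : HGrp := oH n * vH n * (oH (n+1))⁻¹

lemma mk_pW (m : ℕ) : PresentedGroup.mk hRels (pW m) = pH m := by
  simp only [pW, pH, map_mul, map_inv]; rfl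

/-! Relations in `GBV`. -/

lemma gR1 {m q : ℕ} (h : m < q) : vG q * vG m = vG m * vG (q+1) := by
  have := mk_rel_one (rels := gbvRels) (Or.inl ⟨m, q, h, rfl⟩)
  simp only [map_mul, map_inv, map_zpow, mk_pW, mul_inv_eq_one] at this; exact this

lemma gR3 {m : ℕ} {e : ℤ} (he : e = 1 ∨ e = -1) :
    piG m ^ e * vG m = vG (m+1) * piG m ^ e * piG (m+1) ^ e := by
  have := mk_rel_one (rels := gbvRels) (.inr <| .inr <| .inl ⟨m, e, he, rfl⟩)
  simp only [map_mul, map_inv, map_zpow, mk_pW, mul_inv_eq_one] at this; exact this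

lemma gR4 {m q : ℕ} (h : q + 1 < m) : piG q * vG m = vG m * piG q := by
  have := mk_rel_one (rels := gbvRels) (.inr <| .inr <| .inr <| .inl ⟨m, q, h, rfl⟩)
  simp only [map_mul, map_inv, map_zpow, mk_pW, mul_inv_eq_one] at this; exact this

lemma gR5 {m q : ℕ} (h : m < q) : opiG q * vG m = vG m * opiG (q+1) := by
  have := mk_rel_one (rels := gbvRels) (.inr <| .inr <| .inr <| .inr <| .inl ⟨m, q, h, rfl⟩)
  simp only [map_mul, map_inv, map_zpow, mk_pW, mul_inv_eq_one] at this; exact this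

lemma gR6 {m : ℕ} {e : ℤ} (he : e = 1 ∨ e = -1) :
    opiG m ^ e * vG m = piG m ^ e * opiG (m+1) ^ e := by
  have := mk_rel_one (rels := gbvRels)
    (.inr <| .inr <| .inr <| .inr <| .inr <| .inl ⟨m, e, he, rfl⟩)
  simp only [map_mul, map_inv, map_zpow, mk_pW, mul_inv_eq_one] at this; exact this

lemma gR7 {m q : ℕ} (h : m + 2 ≤ q ∨ q + 2 ≤ m) : piG q * piG m = piG m * piG q := by
  have := mk_rel_one (rels := gbvRels)
    (.inr <| .inr <| .inr <| .inr <| .inr <| .inr <| .inl ⟨m, q, h, rfl⟩)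
  simp only [map_mul, map_inv, map_zpow, mk_pW, mul_inv_eq_one] at this; exact this

lemma gR8 (m : ℕ) : piG m * piG (m+1) * piG m = piG (m+1) * piG m * piG (m+1) := by
  have := mk_rel_one (rels := gbvRels)
    (.inr <| .inr <| .inr <| .inr <| .inr <| .inr <| .inr <| .inl ⟨m, rfl⟩)
  simp only [map_mul, map_inv, map_zpow, mk_pW, mul_inv_eq_one] at this; exact this

lemma gR9 {m q : ℕ} (h : m + 2 ≤ q) : opiG q * piG m = piG m * opiG q := by
  have := mk_rel_one (rels := gbvRels)
    (.inr <| .inr <| .inr <| .inr <| .inr <| .inr <| .inr <| .inr <| .inl ⟨m, q, h, rfl⟩)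
  simp only [map_mul, map_inv, map_zpow, mk_pW, mul_inv_eq_one] at this; exact this

lemma gR10 (m : ℕ) : piG m * opiG (m+1) * piG m = opiG (m+1) * piG m * opiG (m+1) := by
  have := mk_rel_one (rels := gbvRels)
    (.inr <| .inr <| .inr <| .inr <| .inr <| .inr <| .inr <| .inr <| .inr ⟨m, rfl⟩)
  simp only [map_mul, map_inv, map_zpow, mk_pW, mul_inv_eq_one] at this; exact this

/-- The word `π̄_m v_m π̄_{m+1}⁻¹` equals `π_m` in `GBV`. -/
lemma pgG (m : ℕ) : opiG m * vG m * (opiG (m+1))⁻¹ = piG m := by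
  have h := gR6 (m := m) (e := 1) (Or.inl rfl)
  simp only [zpow_one] at h
  rw [h]; group

/-- Also `π_m = π̄_{m+1}⁻¹ v_m⁻¹ π̄_m` in `GBV` (from (R6) with `ε = -1`). -/
lemma pgG' (m : ℕ) : (opiG (m+1))⁻¹ * (vG m)⁻¹ * opiG m = piG m := by
  have h := gR6 (m := m) (e := -1) (Or.inr rfl)
  simp only [zpow_neg_one] at h
  have h2 : (piG m)⁻¹ = (opiG m)⁻¹ * vG m * opiG (m+1) := by
    rw [h]; group
  rw [← inv_inj, h2]; group

/-! Relations in `HGrp`. -/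

lemma hR1 {m q : ℕ} (h : m < q) : vH q * vH m = vH m * vH (q+1) := by
  have := mk_rel_one (rels := hRels) (Or.inl ⟨m, q, h, rfl⟩)
  simp only [map_mul, map_inv, map_zpow, mk_pW, mul_inv_eq_one] at this; exact this

lemma hR2 {m : ℕ} {e : ℤ} (he : e = 1 ∨ e = -1) :
    pH m ^ e * vH m = vH (m+1) * pH m ^ e * pH (m+1) ^ e := by
  have := mk_rel_one (rels := hRels) (.inr <| .inl ⟨m, e, he, rfl⟩)
  simp only [map_mul, map_inv, map_zpow, mk_pW, mul_inv_eq_one] at this; exact this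

lemma hR3 {m q : ℕ} (h : q + 1 < m) : pH q * vH m = vH m * pH q := by
  have := mk_rel_one (rels := hRels) (.inr <| .inr <| .inl ⟨m, q, h, rfl⟩)
  simp only [map_mul, map_inv, map_zpow, mk_pW, mul_inv_eq_one] at this; exact this

lemma hR4 {m q : ℕ} (h : m < q) : oH q * vH m = vH m * oH (q+1) := by
  have := mk_rel_one (rels := hRels) (.inr <| .inr <| .inr <| .inl ⟨m, q, h, rfl⟩)
  simp only [map_mul, map_inv, map_zpow, mk_pW, mul_inv_eq_one] at this; exact this

lemma hR5 (m : ℕ) : pH m = (oH (m+1))⁻¹ * (vH m)⁻¹ * oH m := by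
  have := mk_rel_one (rels := hRels) (.inr <| .inr <| .inr <| .inr <| .inl ⟨m, rfl⟩)
  simp only [map_mul, map_inv, map_zpow, mk_pW, mul_inv_eq_one] at this; exact this

lemma hR6 {m q : ℕ} (h : m + 2 ≤ q ∨ q + 2 ≤ m) : pH q * pH m = pH m * pH q := by
  have := mk_rel_one (rels := hRels)
    (.inr <| .inr <| .inr <| .inr <| .inr <| .inl ⟨m, q, h, rfl⟩)
  simp only [map_mul, map_inv, map_zpow, mk_pW, mul_inv_eq_one] at this; exact this

lemma hR7 (m : ℕ) : pH m * pH (m+1) * pH m = pH (m+1) * pH m * pH (m+1) := by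
  have := mk_rel_one (rels := hRels)
    (.inr <| .inr <| .inr <| .inr <| .inr <| .inr <| .inl ⟨m, rfl⟩)
  simp only [map_mul, map_inv, map_zpow, mk_pW, mul_inv_eq_one] at this; exact this

lemma hR8 {m q : ℕ} (h : m + 2 ≤ q) : oH q * pH m = pH m * oH q := by
  have := mk_rel_one (rels := hRels)
    (.inr <| .inr <| .inr <| .inr <| .inr <| .inr <| .inr <| .inl ⟨m, q, h, rfl⟩)
  simp only [map_mul, map_inv, map_zpow, mk_pW, mul_inv_eq_one] at this; exact this

lemma hR9 (m : ℕ) : pH m * oH (m+1) * pH m = oH (m+1) * pH m * oH (m+1) := by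
  have := mk_rel_one (rels := hRels)
    (.inr <| .inr <| .inr <| .inr <| .inr <| .inr <| .inr <| .inr ⟨m, rfl⟩)
  simp only [map_mul, map_inv, map_zpow, mk_pW, mul_inv_eq_one] at this; exact this

/-- Derived relation (R2) in `HGrp`: `π_q v_m = v_m π_{q+1}` for `m < q`. -/
lemma dR2 {m q : ℕ} (h : m < q) : pH q * vH m = vH m * pH (q+1) := by
  have h4 : (oH (q+1))⁻¹ * vH m = vH m * (oH (q+1+1))⁻¹ := by
    have h' := hR4 (m := m) (q := q+1) (Nat.lt_succ_of_lt h)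
    calc (oH (q+1))⁻¹ * vH m
        = (oH (q+1))⁻¹ * (vH m * oH (q+1+1)) * (oH (q+1+1))⁻¹ := by group
      _ = (oH (q+1))⁻¹ * (oH (q+1) * vH m) * (oH (q+1+1))⁻¹ := by rw [h']
      _ = vH m * (oH (q+1+1))⁻¹ := by group
  calc pH q * vH m = oH q * vH q * ((oH (q+1))⁻¹ * vH m) := by rw [pH]; group
    _ = oH q * (vH q * vH m) * (oH (q+1+1))⁻¹ := by rw [h4]; group
    _ = (oH q * vH m) * vH (q+1) * (oH (q+2))⁻¹ := by rw [hR1 h]; group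
    _ = vH m * (oH (q+1) * vH (q+1) * (oH (q+1+1))⁻¹) := by rw [hR4 h]; group
    _ = vH m * pH (q+1) := rfl

/-- Derived relation (R6) in `HGrp`. -/
lemma dR6 {m : ℕ} {e : ℤ} (he : e = 1 ∨ e = -1) :
    oH m ^ e * vH m = pH m ^ e * oH (m+1) ^ e := by
  rcases he with rfl | rfl
  · simp only [zpow_one, pH]; group
  · simp only [zpow_neg_one]
    rw [hR5 m]; group

/-! The two homomorphisms. -/

def fGH : ℕ ⊕ ℕ ⊕ ℕ → HGrp
  | Sum.inl n => vH n
  | Sum.inr (Sum.inl n) => pH n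
  | Sum.inr (Sum.inr n) => oH n

lemma lift_fGH_v (n : ℕ) : FreeGroup.lift fGH (vF n) = vH n := FreeGroup.lift_apply_of
lemma lift_fGH_p (n : ℕ) : FreeGroup.lift fGH (piF n) = pH n := FreeGroup.lift_apply_of
lemma lift_fGH_o (n : ℕ) : FreeGroup.lift fGH (opiF n) = oH n := FreeGroup.lift_apply_of

lemma hψ : ∀ r ∈ gbvRels, FreeGroup.lift fGH r = 1 := by
  rintro r (⟨m, q, h, rfl⟩ | ⟨m, q, h, rfl⟩ | ⟨m, e, he, rfl⟩ | ⟨m, q, h, rfl⟩ |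
    ⟨m, q, h, rfl⟩ | ⟨m, e, he, rfl⟩ | ⟨m, q, h, rfl⟩ | ⟨m, rfl⟩ | ⟨m, q, h, rfl⟩ | ⟨m, rfl⟩) <;>
    simp only [map_mul, map_inv, map_zpow, lift_fGH_v, lift_fGH_p, lift_fGH_o,
      mul_inv_eq_one]
  · exact hR1 h
  · exact dR2 h
  · exact hR2 he
  · exact hR3 h
  · exact hR4 h
  · exact dR6 he
  · exact hR6 h
  · exact hR7 m
  · exact hR8 h
  · exact hR9 m

def fHG : ℕ ⊕ ℕ → GBV
  | Sum.inl n => vG n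
  | Sum.inr n => opiG n

lemma lift_fHG_v (n : ℕ) : FreeGroup.lift fHG (vW n) = vG n := FreeGroup.lift_apply_of
lemma lift_fHG_o (n : ℕ) : FreeGroup.lift fHG (oW n) = opiG n := FreeGroup.lift_apply_of
lemma lift_fHG_p (n : ℕ) : FreeGroup.lift fHG (pW n) = piG n := by
  rw [pW, map_mul, map_mul, map_inv, lift_fHG_v, lift_fHG_o, lift_fHG_o, pgG]

lemma hφ : ∀ r ∈ hRels, FreeGroup.lift fHG r = 1 := by
  rintro r (⟨m, q, h, rfl⟩ | ⟨m, e, he, rfl⟩ | ⟨m, q, h, rfl⟩ | ⟨m, q, h, rfl⟩ |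
    ⟨m, rfl⟩ | ⟨m, q, h, rfl⟩ | ⟨m, rfl⟩ | ⟨m, q, h, rfl⟩ | ⟨m, rfl⟩) <;>
    simp only [map_mul, map_inv, map_zpow, lift_fHG_v, lift_fHG_p, lift_fHG_o,
      mul_inv_eq_one]
  · exact gR1 h
  · exact gR3 he
  · exact gR4 h
  · exact gR5 h
  · exact (pgG' m).symm
  · exact gR7 h
  · exact gR8 m
  · exact gR9 h
  · exact gR10 m

def φ : HGrp →* GBV := PresentedGroup.toGroup hφ
def ψ : GBV →* HGrp := PresentedGroup.toGroup hψ

lemma φ_of : ∀ x, φ (PresentedGroup.of x) = fHG x := fun _ => PresentedGroup.toGroup.of hφ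
lemma ψ_of : ∀ x, ψ (PresentedGroup.of x) = fGH x := fun _ => PresentedGroup.toGroup.of hψ

lemma comp1 : ψ.comp φ = MonoidHom.id HGrp := by
  ext x
  rcases x with n | n <;>
    simp only [MonoidHom.comp_apply, MonoidHom.id_apply, φ_of, ψ_of, fHG, fGH] <;> rfl

lemma comp2 : φ.comp ψ = MonoidHom.id GBV := by
  ext x
  rcases x with n | n | n
  · simp only [MonoidHom.comp_apply, MonoidHom.id_apply, φ_of, ψ_of, fHG, fGH]; rfl
  · show φ (ψ (piG n)) = piG n
    rw [show ψ (piG n) = pH n from ψ_of _, pH, map_mul, map_mul, map_inv]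
    rw [show φ (oH n) = opiG n from φ_of _, show φ (vH n) = vG n from φ_of _,
      show φ (oH (n+1)) = opiG (n+1) from φ_of _, pgG]
  · simp only [MonoidHom.comp_apply, MonoidHom.id_apply, φ_of, ψ_of, fHG, fGH]; rfl

/-- Corollary: `H` is isomorphic to `G_BV` via `v_n ↦ v_n`, `π̄_n ↦ π̄_n`. -/
theorem H_iso_GBV :
    ∃ e : HGrp ≃* GBV,
      (∀ n, e (PresentedGroup.of (Sum.inl n)) = vG n) ∧
      (∀ n, e (PresentedGroup.of (Sum.inr n)) = opiG n) := by
  refine ⟨MonoidHom.toMulEquiv φ ψ comp1 comp2, fun n => ?_, fun n => ?_⟩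
  · exact φ_of (Sum.inl n)
  · exact φ_of (Sum.inr n)

end BrinStmt19
end
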